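/- arXiv:2409.15569 — 5 statements merged into one kernel-verified Lean document; each statement's English description precedes it below -/
import Mathlib

section
/- Interpolation for the uniformly-below relation: let L be a frame, U, V ⊆ L with V a cover such that V⋆ refines U, and let a, b ∈ L satisfy st(a,U) ≤ b. Then the element c = st(a,V) satisfies a ≤ c, st(a,V) ≤ c, and st(c,V) ≤ b; that is, a ◁_V c and c ◁_V b. -/
variable {L : Type*} [Order.Frame L]

/-- The star of `a` with respect to a subset `U`: the join of all members of `U` meeting `a`. -/
def frameStar (U : Set L) (a : L) : L := sSup {u | u ∈ U ∧ a ⊓ u ≠ ⊥}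

/-- `U` refines `V` if every element of `U` is below some element of `V`. -/
def FrameRefines (U V : Set L) : Prop := ∀ u ∈ U, ∃ v ∈ V, u ≤ v

lemma le_frameStar_of_mem {V : Set L} {v x : L} (hv : v ∈ V) (h : x ⊓ v ≠ ⊥) :
    v ≤ frameStar V x := le_sSup ⟨hv, h⟩

theorem uniformlyBelow_interpolation (U V : Set L) (hV : sSup V = ⊤)
    (hstar : FrameRefines (frameStar V '' V) U) (a b : L) (hab : frameStar U a ≤ b) :
    a ≤ frameStar V a ∧ frameStar V a ≤ frameStar V a ∧
      frameStar V (frameStar V a) ≤ b := by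
  refine ⟨?_, le_rfl, ?_⟩
  · calc a = a ⊓ sSup V := by rw [hV, inf_top_eq]
      _ = ⨆ v ∈ V, a ⊓ v := inf_sSup_eq
      _ ≤ frameStar V a := by
        refine iSup₂_le fun v hv => ?_
        by_cases h : a ⊓ v = ⊥
        · simp [h]
        · exact le_trans inf_le_right (le_frameStar_of_mem hv h)
  · refine sSup_le fun v hv => ?_
    obtain ⟨hvV, hne⟩ := hv
    rw [frameStar, sSup_inf_eq] at hne
    have : ∃ w ∈ {u | u ∈ V ∧ a ⊓ u ≠ ⊥}, w ⊓ v ≠ ⊥ := by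
      by_contra h
      push_neg at h
      exact hne (by simp only [iSup₂_eq_bot]; exact h)
    obtain ⟨w, ⟨hwV, hwa⟩, hwv⟩ := this
    obtain ⟨u, huU, hu⟩ := hstar (frameStar V w) ⟨w, hwV, rfl⟩
    have hvle : v ≤ u := le_trans (le_frameStar_of_mem hvV hwv) hu
    have hwle : w ≤ u := le_trans (le_frameStar_of_mem hwV (by
      rw [inf_idem]; intro hbot; exact hwa (le_bot_iff.mp (hbot ▸ inf_le_right)))) hu
    have hau : a ⊓ u ≠ ⊥ := fun hbot =>
      hwa (le_bot_iff.mp (hbot ▸ inf_le_inf_left a hwle))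
    exact le_trans hvle (le_trans (le_frameStar_of_mem huU hau) hab)
end

section
/- The uniform elements form a subframe: let L be a frame and 𝒰 a nonempty set of covers of L that is downward-directed under refinement (for U₁, U₂ ∈ 𝒰 there is W ∈ 𝒰 refining both). Write a ◁ b if st(a,U) ≤ b for some U ∈ 𝒰, and let S = {u ∈ L | u = ⨆ {v | v ◁ u}}. Then ⊤ ∈ S, S is closed under binary meets, and S is closed under arbitrary suprema. -/
variable {L : Type*} [Order.Frame L]

lemma le_frameStar {U : Set L} (hU : sSup U = ⊤) (a : L) : a ≤ frameStar U a := by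
  have h1 : a ⊓ sSup U ≤ frameStar U a := by
    rw [inf_sSup_eq]
    refine iSup₂_le fun u hu => ?_
    by_cases h : a ⊓ u = ⊥
    · simp [h]
    · exact le_trans inf_le_right (le_sSup ⟨hu, h⟩)
  simpa [hU] using h1

lemma frameStar_mono {U : Set L} {a b : L} (hab : a ≤ b) :
    frameStar U a ≤ frameStar U b := by
  refine sSup_le_sSup fun u ⟨hu, h⟩ => ⟨hu, fun hb => h ?_⟩
  exact le_bot_iff.mp (hb ▸ inf_le_inf_right u hab)

lemma frameStar_refines {W U : Set L} (h : FrameRefines W U) (a : L) :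
    frameStar W a ≤ frameStar U a := by
  refine sSup_le fun w ⟨hw, hne⟩ => ?_
  obtain ⟨u, hu, hwu⟩ := h w hw
  refine le_trans hwu (le_sSup ⟨hu, fun hb => hne ?_⟩)
  exact le_bot_iff.mp (hb ▸ inf_le_inf_left a hwu)

/-- The uniformly below relation with respect to a family of covers. -/
def UniformlyBelow (𝒰 : Set (Set L)) (a b : L) : Prop :=
  ∃ U ∈ 𝒰, frameStar U a ≤ b

theorem uniform_elements_subframe (𝒰 : Set (Set L)) (hne : 𝒰.Nonempty)
    (hcov : ∀ U ∈ 𝒰, sSup U = ⊤)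
    (hdir : ∀ U₁ ∈ 𝒰, ∀ U₂ ∈ 𝒰, ∃ W ∈ 𝒰, FrameRefines W U₁ ∧ FrameRefines W U₂) :
    ⊤ ∈ {u : L | u = sSup {v | UniformlyBelow 𝒰 v u}} ∧
    (∀ a ∈ {u : L | u = sSup {v | UniformlyBelow 𝒰 v u}},
      ∀ b ∈ {u : L | u = sSup {v | UniformlyBelow 𝒰 v u}},
        a ⊓ b ∈ {u : L | u = sSup {v | UniformlyBelow 𝒰 v u}}) ∧
    (∀ T ⊆ {u : L | u = sSup {v | UniformlyBelow 𝒰 v u}},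
        sSup T ∈ {u : L | u = sSup {v | UniformlyBelow 𝒰 v u}}) := by
  obtain ⟨U₀, hU₀⟩ := hne
  have hle : ∀ {v b : L}, UniformlyBelow 𝒰 v b → v ≤ b := by
    rintro v b ⟨U, hU, hst⟩
    exact le_trans (le_frameStar (hcov U hU) v) hst
  refine ⟨?_, ?_, ?_⟩
  · refine le_antisymm (le_sSup ⟨U₀, hU₀, le_top⟩) le_top
  · intro a ha b hb
    refine le_antisymm ?_ (sSup_le fun v hv => hle hv)
    calc a ⊓ b = sSup {v | UniformlyBelow 𝒰 v a} ⊓ sSup {v | UniformlyBelow 𝒰 v b} := by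
          rw [← ha, ← hb]
      _ = ⨆ p ∈ {v | UniformlyBelow 𝒰 v a} ×ˢ {v | UniformlyBelow 𝒰 v b}, p.1 ⊓ p.2 :=
          sSup_inf_sSup
      _ ≤ sSup {v | UniformlyBelow 𝒰 v (a ⊓ b)} := ?_
    refine iSup_le ?_
    rintro ⟨v, w⟩
    refine iSup_le ?_
    rintro ⟨⟨Uv, hUv, hv⟩, ⟨Uw, hUw, hw⟩⟩
    obtain ⟨W, hW, hrv, hrw⟩ := hdir Uv hUv Uw hUw
    refine le_sSup ⟨W, hW, le_inf ?_ ?_⟩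
    · exact le_trans (frameStar_mono inf_le_left)
        (le_trans (frameStar_refines hrv v) hv)
    · exact le_trans (frameStar_mono inf_le_right)
        (le_trans (frameStar_refines hrw w) hw)
  · intro T hT
    refine le_antisymm ?_ (sSup_le fun v hv => hle hv)
    refine sSup_le fun t ht => ?_
    rw [hT ht]
    refine sSup_le fun v ⟨U, hU, hst⟩ => le_sSup ⟨U, hU, le_trans hst (le_sSup ht)⟩
end

section
/- A lower triquotient is a locale epimorphism: let L and M be frames, h : M → L a frame homomorphism, and g : L → M a function preserving arbitrary suprema with g(a ⊓ h(b)) = g(a) ⊓ b for all a, b and g(⊤) = ⊤. Then h is injective. -/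
theorem lowerTriquotient_injective
    {L M : Type*} [Order.Frame L] [Order.Frame M]
    (h : FrameHom M L) (g : L → M)
    (hg : ∀ S : Set L, g (sSup S) = sSup (g '' S))
    (hfrob : ∀ (a : L) (b : M), g (a ⊓ h b) = g a ⊓ b)
    (htop : g ⊤ = ⊤) :
    Function.Injective h := by
  have key : ∀ b : M, g (h b) = b := by
    intro b
    have := hfrob ⊤ b
    simpa [htop] using this
  intro x y hxy
  have := key x
  rw [hxy, key y] at this
  exact this.symm
end

section
/- The limit filter of a modulated Cauchy sequence is Cauchy: let X be a set and ℬ a set of families of subsets of X such that every U ∈ ℬ covers X and every U ∈ ℬ admits V ∈ ℬ with V⋆ refining U. Let s : ℕ → X and let m assign to each U ∈ ℬ a natural number such that for all U ∈ ℬ and all n, n' ≥ m(U) there exists u ∈ U with s n ∈ u and s n' ∈ u. Define F to consist of those subsets u ⊆ X for which there exist u' ⊆ X and U' ∈ ℬ with st(u',U') ⊆ u and some N such that s n ∈ u' for all n ≥ N. Then for every U ∈ ℬ there exists u ∈ U with u ∈ F. -/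
/-- The star of a subset `v` with respect to a family `U` of subsets of `X`. -/
def setStar {X : Type*} (U : Set (Set X)) (v : Set X) : Set X :=
  ⋃₀ {u | u ∈ U ∧ (u ∩ v).Nonempty}

/-- A family `U` refines `V` if every member of `U` is contained in some member of `V`. -/
def SetRefines {X : Type*} (U V : Set (Set X)) : Prop := ∀ u ∈ U, ∃ v ∈ V, u ⊆ v

theorem limit_filter_cauchy {X : Type*} (ℬ : Set (Set (Set X)))
    (hcov : ∀ U ∈ ℬ, ⋃₀ U = Set.univ)
    (hstar : ∀ U ∈ ℬ, ∃ V ∈ ℬ, SetRefines (setStar V '' V) U)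
    (s : ℕ → X) (m : Set (Set X) → ℕ)
    (hmod : ∀ U ∈ ℬ, ∀ n ≥ m U, ∀ n' ≥ m U, ∃ u ∈ U, s n ∈ u ∧ s n' ∈ u) :
    ∀ U ∈ ℬ, ∃ u ∈ U,
      u ∈ {w : Set X | ∃ u' : Set X, ∃ U' ∈ ℬ, setStar U' u' ⊆ w ∧
        ∃ N : ℕ, ∀ n ≥ N, s n ∈ u'} := by
  intro U hU
  obtain ⟨V, hV, hVU⟩ := hstar U hU
  obtain ⟨W, hW, hWV⟩ := hstar V hV
  set N := m W with hN
  have hsN : s N ∈ ⋃₀ W := by rw [hcov W hW]; trivial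
  obtain ⟨w0, hw0W, hsNw0⟩ := hsN
  obtain ⟨v, hvV, hw0v⟩ := hWV (setStar W w0) ⟨w0, hw0W, rfl⟩
  obtain ⟨u, huU, hvu⟩ := hVU (setStar V v) ⟨v, hvV, rfl⟩
  refine ⟨u, huU, {x | ∃ n ≥ N, s n = x}, W, hW, ?_, N, fun n hn => ⟨n, hn, rfl⟩⟩
  rintro x ⟨w, ⟨hwW, y, hyw, n, hn, hys⟩, hxw⟩
  obtain ⟨w', hw'W, hsn, hsN'⟩ := hmod W hW n hn N le_rfl
  obtain ⟨v', hv'V, hw'v'⟩ := hWV (setStar W w') ⟨w', hw'W, rfl⟩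
  have hsnw : s n ∈ w := hys ▸ hyw
  have hxv' : x ∈ v' := hw'v' ⟨w, ⟨hwW, ⟨s n, hsnw, hsn⟩⟩, hxw⟩
  have hsnv' : s n ∈ v' := hw'v' ⟨w', ⟨hw'W, ⟨s n, hsn, hsn⟩⟩, hsn⟩
  have hsnv : s n ∈ v := hw0v ⟨w', ⟨hw'W, ⟨s N, hsN', hsNw0⟩⟩, hsn⟩
  exact hvu ⟨v', ⟨hv'V, ⟨s n, hsnv', hsnv⟩⟩, hxv'⟩
end

section
/- Regularisation of a Cauchy filter: let X be a set and ℬ a set of families of subsets of X such that every U ∈ ℬ covers X, ℬ is downward-directed under refinement, and every U ∈ ℬ admits V ∈ ℬ with V⋆ refining U. Let F be a collection of subsets of X that is upward-closed, closed under binary intersections, contains only nonempty sets, and is Cauchy: for every U ∈ ℬ there is u ∈ U with u ∈ F. Define F' = {u ⊆ X | ∃ u' ∈ F, ∃ U ∈ ℬ, st(u',U) ⊆ u}. Then F' is upward-closed, closed under binary intersections, contains only nonempty sets, is Cauchy, and is regular: for every u ∈ F' there exist u' ∈ F' and U ∈ ℬ with st(u',U) ⊆ u. -/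
theorem regularisation_of_cauchy_filter {X : Type*} (ℬ : Set (Set (Set X)))
    (hcov : ∀ U ∈ ℬ, ⋃₀ U = Set.univ)
    (hdir : ∀ U₁ ∈ ℬ, ∀ U₂ ∈ ℬ, ∃ W ∈ ℬ, SetRefines W U₁ ∧ SetRefines W U₂)
    (hstar : ∀ U ∈ ℬ, ∃ V ∈ ℬ, SetRefines (setStar V '' V) U)
    (F : Set (Set X))
    (hup : ∀ u ∈ F, ∀ w : Set X, u ⊆ w → w ∈ F)
    (hmeet : ∀ u₁ ∈ F, ∀ u₂ ∈ F, u₁ ∩ u₂ ∈ F)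
    (hne : ∀ u ∈ F, u.Nonempty)
    (hcauchy : ∀ U ∈ ℬ, ∃ u ∈ U, u ∈ F) :
    (∀ u ∈ {w : Set X | ∃ u' ∈ F, ∃ U ∈ ℬ, setStar U u' ⊆ w}, ∀ w : Set X,
        u ⊆ w → w ∈ {w : Set X | ∃ u' ∈ F, ∃ U ∈ ℬ, setStar U u' ⊆ w}) ∧
    (∀ u₁ ∈ {w : Set X | ∃ u' ∈ F, ∃ U ∈ ℬ, setStar U u' ⊆ w},
      ∀ u₂ ∈ {w : Set X | ∃ u' ∈ F, ∃ U ∈ ℬ, setStar U u' ⊆ w},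
        u₁ ∩ u₂ ∈ {w : Set X | ∃ u' ∈ F, ∃ U ∈ ℬ, setStar U u' ⊆ w}) ∧
    (∀ u ∈ {w : Set X | ∃ u' ∈ F, ∃ U ∈ ℬ, setStar U u' ⊆ w}, u.Nonempty) ∧
    (∀ U ∈ ℬ, ∃ u ∈ U, u ∈ {w : Set X | ∃ u' ∈ F, ∃ U ∈ ℬ, setStar U u' ⊆ w}) ∧
    (∀ u ∈ {w : Set X | ∃ u' ∈ F, ∃ U ∈ ℬ, setStar U u' ⊆ w},
      ∃ u' ∈ {w : Set X | ∃ u'' ∈ F, ∃ U ∈ ℬ, setStar U u'' ⊆ w},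
        ∃ U ∈ ℬ, setStar U u' ⊆ u) := by
  refine ⟨?_, ?_, ?_, ?_, ?_⟩
  · rintro u ⟨u', hu', U, hU, hsub⟩ w huw
    exact ⟨u', hu', U, hU, hsub.trans huw⟩
  · rintro u₁ ⟨a₁, ha₁, U₁, hU₁, h₁⟩ u₂ ⟨a₂, ha₂, U₂, hU₂, h₂⟩
    obtain ⟨W, hW, hr₁, hr₂⟩ := hdir U₁ hU₁ U₂ hU₂
    refine ⟨a₁ ∩ a₂, hmeet a₁ ha₁ a₂ ha₂, W, hW, ?_⟩
    rintro x ⟨w, ⟨hwW, y, hy⟩, hxw⟩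
    constructor
    · obtain ⟨v, hv, hwv⟩ := hr₁ w hwW
      exact h₁ ⟨v, ⟨hv, y, hwv hy.1, hy.2.1⟩, hwv hxw⟩
    · obtain ⟨v, hv, hwv⟩ := hr₂ w hwW
      exact h₂ ⟨v, ⟨hv, y, hwv hy.1, hy.2.2⟩, hwv hxw⟩
  · rintro u ⟨u', hu', U, hU, hsub⟩
    obtain ⟨x, hx⟩ := hne u' hu'
    have : x ∈ ⋃₀ U := (hcov U hU).symm ▸ Set.mem_univ x
    obtain ⟨v, hv, hxv⟩ := this
    exact ⟨x, hsub ⟨v, ⟨hv, x, hxv, hx⟩, hxv⟩⟩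
  · intro U hU
    obtain ⟨V, hV, hr⟩ := hstar U hU
    obtain ⟨v, hvV, hvF⟩ := hcauchy V hV
    obtain ⟨u, huU, hsub⟩ := hr (setStar V v) ⟨v, hvV, rfl⟩
    exact ⟨u, huU, v, hvF, V, hV, hsub⟩
  · rintro u ⟨u', hu', U, hU, hsub⟩
    obtain ⟨V, hV, hr⟩ := hstar U hU
    refine ⟨setStar V u', ⟨u', hu', V, hV, le_refl _⟩, V, hV, ?_⟩
    rintro x ⟨v₁, ⟨hv₁, y, hy₁, v₂, ⟨hv₂, z, hz⟩, hy₂⟩, hxv₁⟩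
    -- v₂ ∈ V meets u' (at z), v₁ meets v₂ (at y), so v₁ ⊆ st(v₂,V) ⊆ some t ∈ U meeting u'
    obtain ⟨t, htU, hst⟩ := hr (setStar V v₂) ⟨v₂, hv₂, rfl⟩
    have hxt : x ∈ t := hst ⟨v₁, ⟨hv₁, y, hy₁, hy₂⟩, hxv₁⟩
    have hzt : z ∈ t := hst ⟨v₂, ⟨hv₂, z, hz.1, hz.1⟩, hz.1⟩
    exact hsub ⟨t, ⟨htU, z, hzt, hz.2⟩, hxt⟩
end
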